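/- arXiv:1301.6522 — 2 statements merged into one kernel-verified Lean document; each statement's English description precedes it below -/
import Mathlib

section
/- For probability measures on Polish spaces, the following are equivalent for random variables X_0,...,X_n and Y_0,...,Y_n: (1) the conditional distribution of Y^n given X^n factors as a product of kernels q_i(dy_i; y^{i-1}, x^i) depending only on past and present source symbols; (2) for each i = 0,...,n-1, Y_i is conditionally independent of (X_{i+1},...,X_n) given (X^i, Y^{i-1}); (3) for each i = 0,...,n-1, Y^i is conditionally independent of X_{i+1} given X^i; (4) for each i = 0,...,n-1, (X_{i+1},...,X_n) is conditionally independent of Y^i given X^i. -/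
open MeasureTheory ProbabilityTheory

section

variable {Ω E F : Type*} [MeasurableSpace Ω] [MeasurableSpace E] [MeasurableSpace F]

/-- The vector `X^i = (X_0, ..., X_i)` of past-and-present source symbols. -/
abbrev pastPresent (X : ℕ → Ω → E) (i : ℕ) : Ω → (Fin (i + 1) → E) :=
  fun ω j => X j ω

/-- The vector `Y^{i-1} = (Y_0, ..., Y_{i-1})` of strictly past symbols. -/
abbrev strictPast (Y : ℕ → Ω → F) (i : ℕ) : Ω → (Fin i → F) :=
  fun ω j => Y j ω

/-- The vector `(X_{i+1}, ..., X_n)` of future source symbols. -/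
abbrev future (X : ℕ → Ω → E) (i n : ℕ) : Ω → (Fin (n - i) → E) :=
  fun ω j => X (i + 1 + j) ω

end

/-!
Conditional independence `m₁ ⟂ m₂ | m` is characterized (Doob) by `μ⟦s | m ⊔ m₂⟧ = μ⟦s | m⟧`
for every `s ∈ m₁`. Through the tower property this gives the graphoid rules of weak union and
contraction, and the whole argument takes place among the σ-algebras generated by the `X_j` and
`Y_j`. Write `𝒫ₖ`, `𝒬ₖ` for those of `X_j`, `Y_j` with `j < k` and `ℱₖ` for that of `X_j` with
`k ≤ j ≤ n`, so that (4) reads `ℱₖ ⟂ 𝒬ₖ | 𝒫ₖ` for `1 ≤ k ≤ n`. This holds trivially for `k = 0`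
(`𝒬₀ = ⊥`) and `k = n + 1` (`ℱₙ₊₁ = ⊥`); contraction carries it from `k` to `k + 1` using (2), and
from `k + 1` to `k` using (3).
-/

open MeasurableSpace Set

namespace MeasurableSpace

variable {Ω : Type*}

lemma isPiSystem_image2_inter (m₁ m₂ : MeasurableSpace Ω) :
    IsPiSystem (image2 (· ∩ ·) {s | MeasurableSet[m₁] s} {t | MeasurableSet[m₂] t}) := by
  rintro _ ⟨a, ha, b, hb, rfl⟩ _ ⟨a', ha', b', hb', rfl⟩ -
  exact ⟨a ∩ a', ha.inter ha', b ∩ b', hb.inter hb', inter_inter_inter_comm a a' b b' ▸ rfl⟩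

lemma sup_eq_generateFrom_image2_inter (m₁ m₂ : MeasurableSpace Ω) :
    m₁ ⊔ m₂
      = generateFrom (image2 (· ∩ ·) {s | MeasurableSet[m₁] s} {t | MeasurableSet[m₂] t}) := by
  refine le_antisymm (sup_le (fun s hs => ?_) (fun t ht => ?_)) (generateFrom_le ?_)
  · exact measurableSet_generateFrom ⟨s, hs, univ, .univ, inter_univ s⟩
  · exact measurableSet_generateFrom ⟨univ, .univ, t, ht, univ_inter t⟩
  · rintro _ ⟨a, ha, b, hb, rfl⟩
    exact (le_sup_left (b := m₂) a ha).inter (le_sup_right (a := m₁) b hb)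

variable {E : Type*} [MeasurableSpace E]

lemma comap_pi_eq_iSup {ι : Type*} (Z : ι → Ω → E) :
    MeasurableSpace.comap (fun ω j => Z j ω) pi = ⨆ j, MeasurableSpace.comap (Z j) ‹_› := by
  simp_rw [MeasurableSpace.pi, comap_iSup, comap_comp]
  rfl

lemma comap_pi_comp_eq_biSup {κ : Type*} (X : ℕ → Ω → E) (g : κ → ℕ) :
    MeasurableSpace.comap (fun ω j => X (g j) ω) pi
      = ⨆ k ∈ range g, MeasurableSpace.comap (X k) ‹_› := by
  rw [comap_pi_eq_iSup, iSup_range]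

end MeasurableSpace

section NatIndexed

variable {α : Type*} [CompleteLattice α] (f : ℕ → α)

lemma biSup_Iio_add_one (k : ℕ) : ⨆ j ∈ Iio (k + 1), f j = (⨆ j ∈ Iio k, f j) ⊔ f k := by
  rw [show Iio (k + 1) = insert k (Iio k) by ext; simp only [mem_Iio, mem_insert_iff]; omega,
    iSup_insert, sup_comm]

lemma biSup_Icc_eq_sup {k n : ℕ} (h : k ≤ n) :
    ⨆ j ∈ Icc k n, f j = f k ⊔ ⨆ j ∈ Icc (k + 1) n, f j := by
  rw [show Icc k n = insert k (Icc (k + 1) n) by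
    ext; simp only [mem_Icc, mem_insert_iff]; omega, iSup_insert]

lemma biSup_Iio_sup_biSup_Icc {k n : ℕ} (h : k ≤ n + 1) :
    (⨆ j ∈ Iio k, f j) ⊔ ⨆ j ∈ Icc k n, f j = ⨆ j ∈ Iio (n + 1), f j := by
  rw [← iSup_union, show Iio k ∪ Icc k n = Iio (n + 1) by
    ext; simp only [mem_union, mem_Iio, mem_Icc]; omega]

end NatIndexed

namespace MeasureTheory

variable {Ω : Type*} {m m₁ m₂ m₃ mΩ : MeasurableSpace Ω} {μ : Measure Ω}

lemma setIntegral_eq_of_isPiSystem (hm : m ≤ mΩ) {S : Set (Set Ω)} (h_gen : m = generateFrom S)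
    (h_pi : IsPiSystem S) {f g : Ω → ℝ} (hf : Integrable f μ) (hg : Integrable g μ)
    (h_univ : ∫ x, f x ∂μ = ∫ x, g x ∂μ) (h_basic : ∀ t ∈ S, ∫ x in t, f x ∂μ = ∫ x in t, g x ∂μ)
    {t : Set Ω} (ht : MeasurableSet[m] t) : ∫ x in t, f x ∂μ = ∫ x in t, g x ∂μ := by
  induction t, ht using MeasurableSpace.induction_on_inter h_gen h_pi with
  | empty => simp
  | basic t ht => exact h_basic t ht
  | compl t ht h => rw [setIntegral_compl (hm t ht) hf, setIntegral_compl (hm t ht) hg, h, h_univ]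
  | iUnion u hdisj hu h =>
    rw [integral_iUnion (fun i => hm _ (hu i)) hdisj hf.integrableOn,
      integral_iUnion (fun i => hm _ (hu i)) hdisj hg.integrableOn]
    exact tsum_congr h

variable [IsFiniteMeasure μ]

lemma condExp_indicator_condExp_ae_eq_mul (f : Ω → ℝ) {t : Set Ω} (ht : MeasurableSet t) :
    μ[t.indicator (μ[f | m]) | m] =ᵐ[μ] μ[f | m] * μ⟦t | m⟧ := by
  have h : t.indicator (μ[f | m]) = μ[f | m] * t.indicator fun _ => 1 := by
    ext ω; by_cases hω : ω ∈ t <;> simp [hω]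
  rw [h]
  exact condExp_mul_of_stronglyMeasurable_left stronglyMeasurable_condExp
    (h ▸ integrable_condExp.indicator ht) ((integrable_const 1).indicator ht)

lemma condExp_ae_eq_of_le_of_le {f : Ω → ℝ} (hm₁₂ : m₁ ≤ m₂) (hm₂₃ : m₂ ≤ m₃) (hm₃ : m₃ ≤ mΩ)
    (h : μ[f | m₃] =ᵐ[μ] μ[f | m₁]) : μ[f | m₂] =ᵐ[μ] μ[f | m₁] :=
  calc μ[f | m₂] =ᵐ[μ] μ[μ[f | m₃] | m₂] := (condExp_condExp_of_le hm₂₃ hm₃).symm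
    _ =ᵐ[μ] μ[μ[f | m₁] | m₂] := condExp_congr_ae h
    _ = μ[f | m₁] := condExp_of_stronglyMeasurable (hm₂₃.trans hm₃)
        (stronglyMeasurable_condExp.mono hm₁₂) integrable_condExp

end MeasureTheory

namespace ProbabilityTheory

variable {Ω : Type*} {m m₁ m₂ m₃ mΩ : MeasurableSpace Ω} [StandardBorelSpace Ω] {μ : Measure Ω}
  [IsFiniteMeasure μ]

theorem CondIndep.condExp_sup_ae_eq {hm : m ≤ mΩ} (hm₁ : m₁ ≤ mΩ) (hm₂ : m₂ ≤ mΩ)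
    (h : CondIndep m m₁ m₂ hm μ) {s : Set Ω} (hs : MeasurableSet[m₁] s) :
    μ⟦s | m ⊔ m₂⟧ =ᵐ[μ] μ⟦s | m⟧ := by
  rw [condIndep_iff m m₁ m₂ hm hm₁ hm₂] at h
  have hsup : m ⊔ m₂ ≤ mΩ := sup_le hm hm₂
  have h_int : Integrable (s.indicator fun _ => (1 : ℝ)) μ :=
    (integrable_const 1).indicator (hm₁ s hs)
  refine (ae_eq_condExp_of_forall_setIntegral_eq hsup h_int
    (fun _ _ _ => integrable_condExp.integrableOn) (fun U hU _ => ?_)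
    (stronglyMeasurable_condExp.mono (le_sup_left : m ≤ m ⊔ m₂)).aestronglyMeasurable).symm
  -- it suffices to compare integrals over the π-system of intersections `b ∩ c`, `b ∈ m`, `c ∈ m₂`
  refine setIntegral_eq_of_isPiSystem hsup (sup_eq_generateFrom_image2_inter m m₂)
    (isPiSystem_image2_inter m m₂) integrable_condExp h_int (integral_condExp hm) ?_ hU
  rintro _ ⟨b, hb, c, hc, rfl⟩
  have hc' : MeasurableSet c := hm₂ c hc
  calc ∫ x in b ∩ c, (μ⟦s | m⟧) x ∂μ = ∫ x in b, c.indicator (μ⟦s | m⟧) x ∂μ :=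
        (setIntegral_indicator hc').symm
    _ = ∫ x in b, μ[c.indicator (μ⟦s | m⟧) | m] x ∂μ :=
        (setIntegral_condExp hm (integrable_condExp.indicator hc') hb).symm
    _ = ∫ x in b, (μ⟦s ∩ c | m⟧) x ∂μ :=
        setIntegral_congr_ae (hm b hb) (((condExp_indicator_condExp_ae_eq_mul _ hc').trans
          (h s c hs hc).symm).mono fun _ h _ => h)
    _ = ∫ x in b, (s ∩ c).indicator (fun _ => (1 : ℝ)) x ∂μ :=
        setIntegral_condExp hm ((integrable_const 1).indicator ((hm₁ s hs).inter hc')) hb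
    _ = ∫ x in b ∩ c, s.indicator (fun _ => (1 : ℝ)) x ∂μ := by
        rw [inter_comm, ← indicator_indicator, setIntegral_indicator hc']

theorem condIndep_of_forall_condExp_sup_ae_eq (hm : m ≤ mΩ) (hm₁ : m₁ ≤ mΩ) (hm₂ : m₂ ≤ mΩ)
    (h : ∀ s, MeasurableSet[m₁] s → μ⟦s | m ⊔ m₂⟧ =ᵐ[μ] μ⟦s | m⟧) : CondIndep m m₁ m₂ hm μ := by
  rw [condIndep_iff m m₁ m₂ hm hm₁ hm₂]
  intro s t hs ht
  calc μ⟦s ∩ t | m⟧ =ᵐ[μ] μ[μ[t.indicator (s.indicator fun _ => 1) | m ⊔ m₂] | m] := by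
        rw [indicator_indicator, inter_comm]
        exact (condExp_condExp_of_le le_sup_left (sup_le hm hm₂)).symm
    _ =ᵐ[μ] μ[t.indicator (μ⟦s | m ⊔ m₂⟧) | m] :=
        condExp_congr_ae (condExp_indicator ((integrable_const 1).indicator (hm₁ s hs))
          (le_sup_right (a := m) t ht))
    _ =ᵐ[μ] μ[t.indicator (μ⟦s | m⟧) | m] := condExp_congr_ae <| by
        filter_upwards [h s hs] with ω hω
        simp only [indicator, hω]
    _ =ᵐ[μ] μ⟦s | m⟧ * μ⟦t | m⟧ := condExp_indicator_condExp_ae_eq_mul _ (hm₂ t ht)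

theorem condIndep_iff_forall_condExp_sup_ae_eq (hm : m ≤ mΩ) (hm₁ : m₁ ≤ mΩ) (hm₂ : m₂ ≤ mΩ) :
    CondIndep m m₁ m₂ hm μ ↔ ∀ s, MeasurableSet[m₁] s → μ⟦s | m ⊔ m₂⟧ =ᵐ[μ] μ⟦s | m⟧ :=
  ⟨fun h _ hs => h.condExp_sup_ae_eq hm₁ hm₂ hs, condIndep_of_forall_condExp_sup_ae_eq hm hm₁ hm₂⟩

theorem CondIndep.weak_union {hm : m ≤ mΩ} (hm₁ : m₁ ≤ mΩ) (hm₂ : m₂ ≤ mΩ) (hm₃ : m₃ ≤ mΩ)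
    (h : CondIndep m m₁ (m₂ ⊔ m₃) hm μ) : CondIndep (m ⊔ m₂) m₁ m₃ (sup_le hm hm₂) μ := by
  rw [condIndep_iff_forall_condExp_sup_ae_eq hm hm₁ (sup_le hm₂ hm₃)] at h
  rw [condIndep_iff_forall_condExp_sup_ae_eq (sup_le hm hm₂) hm₁ hm₃]
  intro s hs
  rw [sup_assoc]
  refine (h s hs).trans (condExp_ae_eq_of_le_of_le le_sup_left ?_ ?_ (h s hs)).symm
  · exact sup_le_sup_left le_sup_left m
  · exact sup_le hm (sup_le hm₂ hm₃)

theorem CondIndep.contraction {hm : m ≤ mΩ} (hm₁ : m₁ ≤ mΩ) (hm₂ : m₂ ≤ mΩ) (hm₃ : m₃ ≤ mΩ)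
    (h₂ : CondIndep m m₁ m₂ hm μ) (h₃ : CondIndep (m ⊔ m₂) m₁ m₃ (sup_le hm hm₂) μ) :
    CondIndep m m₁ (m₂ ⊔ m₃) hm μ := by
  rw [condIndep_iff_forall_condExp_sup_ae_eq hm hm₁ hm₂] at h₂
  rw [condIndep_iff_forall_condExp_sup_ae_eq (sup_le hm hm₂) hm₁ hm₃] at h₃
  rw [condIndep_iff_forall_condExp_sup_ae_eq hm hm₁ (sup_le hm₂ hm₃)]
  intro s hs
  rw [← sup_assoc]
  exact (h₃ s hs).trans (h₂ s hs)

theorem CondIndep.sup_right_of_le {hm : m ≤ mΩ} (hm₁ : m₁ ≤ mΩ) (hm₂ : m₂ ≤ mΩ) (hm₃ : m₃ ≤ m)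
    (h : CondIndep m m₁ m₂ hm μ) : CondIndep m m₁ (m₃ ⊔ m₂) hm μ := by
  rw [condIndep_iff_forall_condExp_sup_ae_eq hm hm₁ hm₂] at h
  rwa [condIndep_iff_forall_condExp_sup_ae_eq hm hm₁ (sup_le (hm₃.trans hm) hm₂), ← sup_assoc,
    sup_eq_left.mpr hm₃]

variable {𝒳 𝒴 : ℕ → MeasurableSpace Ω} {n : ℕ}

theorem condIndep_future_past_of_forall_condIndep_current (h𝒳 : ∀ j, 𝒳 j ≤ mΩ)
    (h𝒴 : ∀ j, 𝒴 j ≤ mΩ)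
    (h : ∀ k < n, CondIndep ((⨆ j ∈ Iio (k + 1), 𝒳 j) ⊔ ⨆ j ∈ Iio k, 𝒴 j) (𝒴 k)
      (⨆ j ∈ Icc (k + 1) n, 𝒳 j) (sup_le (iSup₂_le fun j _ => h𝒳 j) (iSup₂_le fun j _ => h𝒴 j)) μ)
    {k : ℕ} (hk : k ≤ n) :
    CondIndep (⨆ j ∈ Iio k, 𝒳 j) (⨆ j ∈ Icc k n, 𝒳 j) (⨆ j ∈ Iio k, 𝒴 j)
      (iSup₂_le fun j _ => h𝒳 j) μ := by
  induction k with
  | zero => simpa using condIndep_bot_right _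
  | succ k ih =>
    have hX (S : Set ℕ) : ⨆ j ∈ S, 𝒳 j ≤ mΩ := iSup₂_le fun j _ => h𝒳 j
    have hY (S : Set ℕ) : ⨆ j ∈ S, 𝒴 j ≤ mΩ := iSup₂_le fun j _ => h𝒴 j
    have hF := ih (by omega)
    simp only [biSup_Icc_eq_sup 𝒳 (show k ≤ n by omega)] at hF
    have hYk := h k (by omega)
    simp only [biSup_Iio_add_one] at hYk ⊢
    exact (hF.symm.weak_union (hY _) (h𝒳 k) (hX _)).symm.contraction (hX _) (hY _) (h𝒴 k)
      hYk.symm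

theorem condIndep_future_past_of_forall_condIndep_next (h𝒳 : ∀ j, 𝒳 j ≤ mΩ)
    (h𝒴 : ∀ j, 𝒴 j ≤ mΩ)
    (h : ∀ k < n, CondIndep (⨆ j ∈ Iio (k + 1), 𝒳 j) (⨆ j ∈ Iio (k + 1), 𝒴 j) (𝒳 (k + 1))
      (iSup₂_le fun j _ => h𝒳 j) μ)
    {k : ℕ} (hk : k ≤ n) :
    CondIndep (⨆ j ∈ Iio (k + 1), 𝒳 j) (⨆ j ∈ Icc (k + 1) n, 𝒳 j) (⨆ j ∈ Iio (k + 1), 𝒴 j)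
      (iSup₂_le fun j _ => h𝒳 j) μ := by
  induction hk using Nat.decreasingInduction with
  | self => simpa using condIndep_bot_left _
  | of_succ k hk ih =>
    have hX (S : Set ℕ) : ⨆ j ∈ S, 𝒳 j ≤ mΩ := iSup₂_le fun j _ => h𝒳 j
    have hY (S : Set ℕ) : ⨆ j ∈ S, 𝒴 j ≤ mΩ := iSup₂_le fun j _ => h𝒴 j
    simp only [biSup_Iio_add_one _ (k + 1)] at ih
    rw [biSup_Icc_eq_sup 𝒳 (show k + 1 ≤ n by omega)]
    exact ((h k hk).contraction (hY _) (h𝒳 _) (hX _)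
      (condIndep_of_condIndep_of_le_right ih le_sup_left).symm).symm

theorem tfae_condIndep_past_future (h𝒳 : ∀ j, 𝒳 j ≤ mΩ) (h𝒴 : ∀ j, 𝒴 j ≤ mΩ) :
    List.TFAE
      [ ∀ k < n, CondIndep ((⨆ j ∈ Iio (k + 1), 𝒳 j) ⊔ ⨆ j ∈ Iio k, 𝒴 j) (𝒴 k)
          (⨆ j ∈ Iio (n + 1), 𝒳 j)
          (sup_le (iSup₂_le fun j _ => h𝒳 j) (iSup₂_le fun j _ => h𝒴 j)) μ,
        ∀ k < n, CondIndep ((⨆ j ∈ Iio (k + 1), 𝒳 j) ⊔ ⨆ j ∈ Iio k, 𝒴 j) (𝒴 k)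
          (⨆ j ∈ Icc (k + 1) n, 𝒳 j)
          (sup_le (iSup₂_le fun j _ => h𝒳 j) (iSup₂_le fun j _ => h𝒴 j)) μ,
        ∀ k < n, CondIndep (⨆ j ∈ Iio (k + 1), 𝒳 j) (⨆ j ∈ Iio (k + 1), 𝒴 j) (𝒳 (k + 1))
          (iSup₂_le fun j _ => h𝒳 j) μ,
        ∀ k < n, CondIndep (⨆ j ∈ Iio (k + 1), 𝒳 j) (⨆ j ∈ Icc (k + 1) n, 𝒳 j)
          (⨆ j ∈ Iio (k + 1), 𝒴 j) (iSup₂_le fun j _ => h𝒳 j) μ ] := by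
  have hX (S : Set ℕ) : ⨆ j ∈ S, 𝒳 j ≤ mΩ := iSup₂_le fun j _ => h𝒳 j
  have hY (S : Set ℕ) : ⨆ j ∈ S, 𝒴 j ≤ mΩ := iSup₂_le fun j _ => h𝒴 j
  tfae_have 1 → 2 := fun h k hk =>
    condIndep_of_condIndep_of_le_right (h k hk) (biSup_mono fun j hj => by simp only [mem_Icc, mem_Iio] at hj ⊢; omega)
  tfae_have 2 → 1 := fun h k hk => by
    rw [← biSup_Iio_sup_biSup_Icc 𝒳 (show k + 1 ≤ n + 1 by omega)]
    exact (h k hk).sup_right_of_le (h𝒴 k) (hX _) le_sup_left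
  tfae_have 2 → 4 := fun h k hk =>
    condIndep_future_past_of_forall_condIndep_current h𝒳 h𝒴 h hk
  tfae_have 4 → 2 := fun h k hk => by
    have hk' := h k hk
    simp only [biSup_Iio_add_one 𝒴] at hk'
    exact (hk'.weak_union (hX _) (hY _) (h𝒴 k)).symm
  tfae_have 4 → 3 := fun h k hk =>
    (condIndep_of_condIndep_of_le_left (h k hk) (le_biSup 𝒳 (by simp only [mem_Icc]; omega))).symm
  tfae_have 3 → 4 := fun h k hk =>
    condIndep_future_past_of_forall_condIndep_next h𝒳 h𝒴 h hk.le
  tfae_finish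

end ProbabilityTheory

section

variable {Ω E F : Type*} [MeasurableSpace E] [MeasurableSpace F]

lemma comap_pastPresent (X : ℕ → Ω → E) (i : ℕ) :
    MeasurableSpace.comap (pastPresent X i) inferInstance
      = ⨆ j ∈ Iio (i + 1), MeasurableSpace.comap (X j) inferInstance := by
  rw [← Fin.range_val]
  exact comap_pi_comp_eq_biSup X Fin.val

lemma comap_strictPast (Y : ℕ → Ω → F) (i : ℕ) :
    MeasurableSpace.comap (strictPast Y i) inferInstance
      = ⨆ j ∈ Iio i, MeasurableSpace.comap (Y j) inferInstance := by
  rw [← Fin.range_val]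
  exact comap_pi_comp_eq_biSup Y Fin.val

lemma comap_future (X : ℕ → Ω → E) (i n : ℕ) :
    MeasurableSpace.comap (future X i n) inferInstance
      = ⨆ j ∈ Icc (i + 1) n, MeasurableSpace.comap (X j) inferInstance := by
  rw [show Icc (i + 1) n = range fun j : Fin (n - i) => i + 1 + (j : ℕ) by
    ext k
    simp only [mem_Icc, mem_range, Fin.exists_iff]
    exact ⟨fun hk => ⟨k - (i + 1), by omega, by omega⟩, by rintro ⟨j, hj, rfl⟩; omega⟩]
  exact comap_pi_comp_eq_biSup X _

end

section

variable {Ω E F : Type*} [MeasurableSpace Ω] [MeasurableSpace E] [MeasurableSpace F]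

/-- Equivalent characterizations of nonanticipation (Lemma 1 of the paper): for random
variables `X_0,...,X_n` and `Y_0,...,Y_n` on Polish (standard Borel) spaces, the
following are equivalent:
(1) the conditional distribution of `Y^n` given `X^n` factors as a product of kernels
    `q_i(dy_i; y^{i-1}, x^i)` depending only on past and present source symbols, i.e.
    for each `i`, `Y_i` is conditionally independent of the whole source `X^n` given
    `(X^i, Y^{i-1})`;
(2) for each `i = 0,...,n-1`, `Y_i ⟂ (X_{i+1},...,X_n) | (X^i, Y^{i-1})`;
(3) for each `i = 0,...,n-1`, `Y^i ⟂ X_{i+1} | X^i`;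
(4) for each `i = 0,...,n-1`, `(X_{i+1},...,X_n) ⟂ Y^i | X^i`. -/
theorem nonanticipative_markov_chain_tfae
    [StandardBorelSpace Ω]
    (μ : Measure Ω) [IsProbabilityMeasure μ]
    (n : ℕ) (X : ℕ → Ω → E) (Y : ℕ → Ω → F)
    (hX : ∀ i, Measurable (X i)) (hY : ∀ i, Measurable (Y i)) :
    List.TFAE
      [ -- (1) nonanticipative factorization of the reproduction distribution
        ∀ i < n, CondIndepFun
          (MeasurableSpace.comap
            (fun ω => (pastPresent X i ω, strictPast Y i ω)) inferInstance)
          (by apply Measurable.comap_le; fun_prop)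
          (Y i) (pastPresent X n) μ,
        -- (2) Y_i ⟂ (X_{i+1},...,X_n) | (X^i, Y^{i-1})
        ∀ i < n, CondIndepFun
          (MeasurableSpace.comap
            (fun ω => (pastPresent X i ω, strictPast Y i ω)) inferInstance)
          (by apply Measurable.comap_le; fun_prop)
          (Y i) (future X i n) μ,
        -- (3) Y^i ⟂ X_{i+1} | X^i
        ∀ i < n, CondIndepFun
          (MeasurableSpace.comap (pastPresent X i) inferInstance)
          (by apply Measurable.comap_le; fun_prop)
          (pastPresent Y i) (X (i + 1)) μ,
        -- (4) (X_{i+1},...,X_n) ⟂ Y^i | X^i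
        ∀ i < n, CondIndepFun
          (MeasurableSpace.comap (pastPresent X i) inferInstance)
          (by apply Measurable.comap_le; fun_prop)
          (future X i n) (pastPresent Y i) μ ] := by
  simp only [condIndepFun_iff_condIndep, Prod.instMeasurableSpace, comap_prodMk, comap_pastPresent,
    comap_strictPast, comap_future]
  exact tfae_condIndep_past_future (fun j => (hX j).comap_le) (fun j => (hY j).comap_le)

end
end

section
/- For a fixed probability measure μ on X, the mutual information functional Q ↦ I(μ, Q) := D(μ ⊗ Q ‖ μ × ν_Q), where ν_Q is the Y-marginal of μ ⊗ Q, is convex in the kernel Q: for kernels Q₁, Q₂ and λ ∈ [0,1], I(μ, λQ₁ + (1−λ)Q₂) ≤ λ I(μ, Q₁) + (1−λ) I(μ, Q₂). -/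
open MeasureTheory ProbabilityTheory
open scoped ENNReal

-- Relative entropy (Kullback–Leibler divergence), valued in `[0,∞]`.
open Classical in
noncomputable def klDiv {Z : Type*} [MeasurableSpace Z] (P Q : Measure Z) : ℝ≥0∞ :=
  if P ≪ Q ∧ Integrable (llr P Q) P then ENNReal.ofReal (∫ z, llr P Q z ∂P) else ⊤

/-- The mutual information `I(μ, Q) := D(μ ⊗ Q ‖ μ × ν_Q)`, where `ν_Q` is the second
marginal of `μ ⊗ Q`. -/
noncomputable def mutualInfoFun {X Y : Type*} [MeasurableSpace X] [MeasurableSpace Y]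
    (μ : Measure X) (Q : Kernel X Y) : ℝ≥0∞ :=
  klDiv (μ.compProd Q) (μ.prod ((μ.compProd Q).snd))

/-! Both arguments of `D(μ ⊗ Q ‖ μ × ν_Q)` depend affinely on `Q`: a pointwise mixture of
kernels yields the same mixture of joint laws, of output marginals, and hence of the product
measures. So it suffices that relative entropy is jointly convex, which follows from
homogeneity and joint subadditivity `D(P₁ + P₂ ‖ R₁ + R₂) ≤ D(P₁ ‖ R₁) + D(P₂ ‖ R₂)`. For the
latter, with `ρᵢ = dRᵢ/d(R₁ + R₂)` and `xᵢ = dPᵢ/dRᵢ`, the density of `P₁ + P₂` is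
`ρ₁ x₁ + ρ₂ x₂` with `ρ₁ + ρ₂ = 1`, so convexity of `klFun x = x log x + 1 - x` bounds the
integrand of the `klFun`-form of the divergence pointwise. -/

open scoped NNReal

namespace MeasureTheory.Measure

variable {α β : Type*} {mα : MeasurableSpace α} {mβ : MeasurableSpace β}

lemma rnDeriv_add_rnDeriv_eq_one (ν₁ ν₂ : Measure α) [SigmaFinite ν₁] [SigmaFinite ν₂] :
    ∀ᵐ x ∂(ν₁ + ν₂), ν₁.rnDeriv (ν₁ + ν₂) x + ν₂.rnDeriv (ν₁ + ν₂) x = 1 := by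
  filter_upwards [rnDeriv_add' ν₁ ν₂ (ν₁ + ν₂), rnDeriv_self (ν₁ + ν₂)] with x hadd hself
  rw [← hself, hadd, Pi.add_apply]

lemma compProd_eq_smul_add_smul (μ : Measure α) [SFinite μ] {κ κ₁ κ₂ : Kernel α β}
    [IsSFiniteKernel κ] [IsSFiniteKernel κ₁] [IsSFiniteKernel κ₂] (a b : ℝ≥0∞)
    (h : ∀ x, κ x = a • κ₁ x + b • κ₂ x) :
    μ ⊗ₘ κ = a • (μ ⊗ₘ κ₁) + b • (μ ⊗ₘ κ₂) := by
  ext s hs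
  have hmeas₁ := Kernel.measurable_kernel_prodMk_left (κ := κ₁) hs
  have hmeas₂ := Kernel.measurable_kernel_prodMk_left (κ := κ₂) hs
  simp only [compProd_apply hs, h, add_apply, smul_apply, smul_eq_mul,
    lintegral_add_left (hmeas₁.const_mul a), lintegral_const_mul a hmeas₁,
    lintegral_const_mul b hmeas₂]

end MeasureTheory.Measure

namespace InformationTheory

open Measure

variable {α : Type*} {mα : MeasurableSpace α} {μ₁ μ₂ ν₁ ν₂ : Measure α}

lemma ofReal_klFun_rnDeriv_add_le [SigmaFinite μ₁] [SigmaFinite μ₂] [SigmaFinite ν₁]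
    [SigmaFinite ν₂] (h₁ : μ₁ ≪ ν₁) (h₂ : μ₂ ≪ ν₂) :
    ∀ᵐ x ∂(ν₁ + ν₂), ENNReal.ofReal (klFun ((μ₁ + μ₂).rnDeriv (ν₁ + ν₂) x).toReal)
      ≤ ν₁.rnDeriv (ν₁ + ν₂) x * ENNReal.ofReal (klFun (μ₁.rnDeriv ν₁ x).toReal)
        + ν₂.rnDeriv (ν₁ + ν₂) x * ENNReal.ofReal (klFun (μ₂.rnDeriv ν₂ x).toReal) := by
  filter_upwards [rnDeriv_add' μ₁ μ₂ (ν₁ + ν₂), rnDeriv_mul_rnDeriv (κ := ν₁ + ν₂) h₁,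
    rnDeriv_mul_rnDeriv (κ := ν₁ + ν₂) h₂, rnDeriv_add_rnDeriv_eq_one ν₁ ν₂,
    rnDeriv_ne_top (μ₁ + μ₂) (ν₁ + ν₂)] with x hadd hchain₁ hchain₂ hone hfin
  rw [hadd, Pi.add_apply, ← hchain₁, ← hchain₂, Pi.mul_apply, Pi.mul_apply] at hfin ⊢
  obtain ⟨hfin₁, hfin₂⟩ := ENNReal.add_ne_top.1 hfin
  obtain ⟨hρ₁, hρ₂⟩ := ENNReal.add_ne_top.1 (hone ▸ ENNReal.one_ne_top)
  set ρ₁ := ν₁.rnDeriv (ν₁ + ν₂) x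
  set ρ₂ := ν₂.rnDeriv (ν₁ + ν₂) x
  have hρ : ρ₁.toReal + ρ₂.toReal = 1 := by
    rw [← ENNReal.toReal_add hρ₁ hρ₂, hone, ENNReal.toReal_one]
  have hconvex := convexOn_klFun.2 (Set.mem_Ici.2 (μ₁.rnDeriv ν₁ x).toReal_nonneg)
    (Set.mem_Ici.2 (μ₂.rnDeriv ν₂ x).toReal_nonneg) ρ₁.toReal_nonneg ρ₂.toReal_nonneg hρ
  have hweighted : ρ₁ * ENNReal.ofReal (klFun (μ₁.rnDeriv ν₁ x).toReal)
        + ρ₂ * ENNReal.ofReal (klFun (μ₂.rnDeriv ν₂ x).toReal)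
      = ENNReal.ofReal (ρ₁.toReal * klFun (μ₁.rnDeriv ν₁ x).toReal
        + ρ₂.toReal * klFun (μ₂.rnDeriv ν₂ x).toReal) := by
    rw [ENNReal.ofReal_add (mul_nonneg ρ₁.toReal_nonneg (klFun_nonneg ENNReal.toReal_nonneg))
        (mul_nonneg ρ₂.toReal_nonneg (klFun_nonneg ENNReal.toReal_nonneg)),
      ENNReal.ofReal_mul ρ₁.toReal_nonneg, ENNReal.ofReal_mul ρ₂.toReal_nonneg,
      ENNReal.ofReal_toReal hρ₁, ENNReal.ofReal_toReal hρ₂]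
  rw [hweighted, ENNReal.toReal_add hfin₁ hfin₂, ENNReal.toReal_mul, ENNReal.toReal_mul]
  refine ENNReal.ofReal_le_ofReal ?_
  simpa only [smul_eq_mul, mul_comm (μ₁.rnDeriv ν₁ x).toReal, mul_comm (μ₂.rnDeriv ν₂ x).toReal]
    using hconvex

variable [IsFiniteMeasure μ₁] [IsFiniteMeasure μ₂] [IsFiniteMeasure ν₁] [IsFiniteMeasure ν₂]

theorem klDiv_add_le_add : klDiv (μ₁ + μ₂) (ν₁ + ν₂) ≤ klDiv μ₁ ν₁ + klDiv μ₂ ν₂ := by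
  by_cases h₁ : μ₁ ≪ ν₁
  swap; · simp [h₁]
  by_cases h₂ : μ₂ ≪ ν₂
  swap; · simp [h₂]
  rw [klDiv_eq_lintegral_klFun_of_ac (h₁.add h₂), klDiv_eq_lintegral_klFun_of_ac h₁,
    klDiv_eq_lintegral_klFun_of_ac h₂]
  refine (lintegral_mono_ae (ofReal_klFun_rnDeriv_add_le h₁ h₂)).trans_eq ?_
  rw [lintegral_add_left (by fun_prop),
    lintegral_rnDeriv_mul (AbsolutelyContinuous.rfl.add_right ν₂) (by fun_prop),
    lintegral_rnDeriv_mul (AbsolutelyContinuous.rfl.add_right' ν₁) (by fun_prop)]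

theorem klDiv_smul_add_smul_le {a b : ℝ≥0∞} (ha : a ≠ ∞) (hb : b ≠ ∞) :
    klDiv (a • μ₁ + b • μ₂) (a • ν₁ + b • ν₂) ≤ a * klDiv μ₁ ν₁ + b * klDiv μ₂ ν₂ := by
  lift a to ℝ≥0 using ha
  lift b to ℝ≥0 using hb
  simp only [← ENNReal.smul_def]
  exact klDiv_add_le_add.trans_eq (by rw [klDiv_smul_same, klDiv_smul_same])

end InformationTheory

-- Mathlib's `klDiv` carries the correction term `ν univ - μ univ`, needed for finite measures.
lemma klDiv_eq_informationTheory_klDiv {α : Type*} [MeasurableSpace α] {μ ν : Measure α}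
    (h : μ Set.univ = ν Set.univ) : klDiv μ ν = InformationTheory.klDiv μ ν := by
  rw [klDiv, InformationTheory.klDiv_def, measureReal_def, measureReal_def, h, add_sub_cancel_right]

lemma mutualInfoFun_eq_klDiv {X Y : Type*} [MeasurableSpace X] [MeasurableSpace Y]
    (μ : Measure X) [IsProbabilityMeasure μ] (Q : Kernel X Y) [IsMarkovKernel Q] :
    mutualInfoFun μ Q = InformationTheory.klDiv (μ ⊗ₘ Q) (μ.prod (μ ⊗ₘ Q).snd) :=
  klDiv_eq_informationTheory_klDiv (by simp only [measure_univ])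

theorem mutualInfo_convex_in_kernel_general
    {X Y : Type*} [MeasurableSpace X] [MeasurableSpace Y]
    (μ : Measure X) [IsProbabilityMeasure μ]
    (Q₁ Q₂ Q : Kernel X Y) [IsMarkovKernel Q₁] [IsMarkovKernel Q₂] [IsMarkovKernel Q]
    (lam : ℝ≥0∞) (hlam : lam ≤ 1)
    (hQ : ∀ x, Q x = lam • Q₁ x + (1 - lam) • Q₂ x) :
    mutualInfoFun μ Q ≤ lam * mutualInfoFun μ Q₁ + (1 - lam) * mutualInfoFun μ Q₂ := by
  have hjoint := μ.compProd_eq_smul_add_smul lam (1 - lam) hQ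
  have hproduct : μ.prod (μ ⊗ₘ Q).snd
      = lam • μ.prod (μ ⊗ₘ Q₁).snd + (1 - lam) • μ.prod (μ ⊗ₘ Q₂).snd := by
    rw [hjoint, Measure.snd_add, Measure.snd, Measure.snd, Measure.map_smul, Measure.map_smul,
      Measure.prod_add, Measure.prod_smul_right, Measure.prod_smul_right]
    rfl
  rw [mutualInfoFun_eq_klDiv, mutualInfoFun_eq_klDiv, mutualInfoFun_eq_klDiv, hproduct, hjoint]
  exact InformationTheory.klDiv_smul_add_smul_le (ne_top_of_le_ne_top ENNReal.one_ne_top hlam)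
    (ne_top_of_le_ne_top ENNReal.one_ne_top tsub_le_self)

/-- For a fixed source distribution `μ`, the mutual information functional
`Q ↦ I(μ, Q)` is convex in the kernel `Q`: for a pointwise convex combination
`Q = λ Q₁ + (1−λ) Q₂` one has `I(μ,Q) ≤ λ I(μ,Q₁) + (1−λ) I(μ,Q₂)`. -/
theorem mutualInfo_convex_in_kernel
    {X Y : Type*} [MeasurableSpace X] [MeasurableSpace Y]
    [StandardBorelSpace X] [StandardBorelSpace Y]
    (μ : Measure X) [IsProbabilityMeasure μ]
    (Q₁ Q₂ Q : Kernel X Y) [IsMarkovKernel Q₁] [IsMarkovKernel Q₂] [IsMarkovKernel Q]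
    (lam : ℝ≥0∞) (hlam : lam ≤ 1)
    (hQ : ∀ x, Q x = lam • Q₁ x + (1 - lam) • Q₂ x) :
    mutualInfoFun μ Q ≤ lam * mutualInfoFun μ Q₁ + (1 - lam) * mutualInfoFun μ Q₂ :=
  mutualInfo_convex_in_kernel_general μ Q₁ Q₂ Q lam hlam hQ
end
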